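/- For the Heisenberg Lie algebra H_{2n+1} with n ≥ 2, every scalar 2-cocycle ω on H_{2n+1} satisfies ω(x, z) = 0 for all x, where z is the central generator. Consequently, for any 1-form α vanishing on brackets, the map Φ(x) = ι_xω + α(x)α is not injective. -/

import Mathlib

/-- The `(2n+1)`-dimensional Heisenberg Lie algebra: elements `(x, y, s)` stand
for `∑ xᵢ eᵢ + ∑ yᵢ fᵢ + s z`, with the only nonzero brackets `[eᵢ, fᵢ] = z`. -/
def Heis (n : ℕ) : Type := (Fin n → ℝ) × (Fin n → ℝ) × ℝ

instance (n : ℕ) : AddCommGroup (Heis n) :=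
  inferInstanceAs (AddCommGroup ((Fin n → ℝ) × (Fin n → ℝ) × ℝ))

noncomputable instance (n : ℕ) : Module ℝ (Heis n) :=
  inferInstanceAs (Module ℝ ((Fin n → ℝ) × (Fin n → ℝ) × ℝ))

instance (n : ℕ) : Module.Finite ℝ (Heis n) :=
  inferInstanceAs (Module.Finite ℝ ((Fin n → ℝ) × (Fin n → ℝ) × ℝ))

noncomputable instance (n : ℕ) : LieRing (Heis n) where
  bracket x y := (0, 0, ∑ i, (x.1 i * y.2.1 i - y.1 i * x.2.1 i))
  add_lie x y z := by
    refine Prod.ext (zero_add (0 : Fin n → ℝ)).symm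
      (Prod.ext (zero_add (0 : Fin n → ℝ)).symm ?_)
    show (∑ i, ((x + y).1 i * z.2.1 i - z.1 i * (x + y).2.1 i)) =
      (∑ i, (x.1 i * z.2.1 i - z.1 i * x.2.1 i)) +
      (∑ i, (y.1 i * z.2.1 i - z.1 i * y.2.1 i))
    rw [← Finset.sum_add_distrib]
    refine Finset.sum_congr rfl fun i _ => ?_
    show ((x.1 + y.1) i * z.2.1 i - z.1 i * (x.2.1 + y.2.1) i) = _
    simp only [Pi.add_apply]; ring
  lie_add x y z := by
    refine Prod.ext (zero_add (0 : Fin n → ℝ)).symm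
      (Prod.ext (zero_add (0 : Fin n → ℝ)).symm ?_)
    show (∑ i, (x.1 i * (y + z).2.1 i - (y + z).1 i * x.2.1 i)) =
      (∑ i, (x.1 i * y.2.1 i - y.1 i * x.2.1 i)) +
      (∑ i, (x.1 i * z.2.1 i - z.1 i * x.2.1 i))
    rw [← Finset.sum_add_distrib]
    refine Finset.sum_congr rfl fun i _ => ?_
    show (x.1 i * (y.2.1 + z.2.1) i - (y.1 + z.1) i * x.2.1 i) = _
    simp only [Pi.add_apply]; ring
  lie_self x := by
    refine Prod.ext rfl (Prod.ext rfl ?_)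
    show (∑ i, (x.1 i * x.2.1 i - x.1 i * x.2.1 i)) = 0
    simp
  leibniz_lie x y z := by
    refine Prod.ext (zero_add (0 : Fin n → ℝ)).symm
      (Prod.ext (zero_add (0 : Fin n → ℝ)).symm ?_)
    show (∑ i, (x.1 i * (0 : Fin n → ℝ) i - (0 : Fin n → ℝ) i * x.2.1 i)) =
      (∑ i, ((0 : Fin n → ℝ) i * z.2.1 i - z.1 i * (0 : Fin n → ℝ) i)) +
      (∑ i, (y.1 i * (0 : Fin n → ℝ) i - (0 : Fin n → ℝ) i * y.2.1 i))
    simp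

noncomputable instance (n : ℕ) : LieAlgebra ℝ (Heis n) where
  lie_smul c x y := by
    refine Prod.ext (smul_zero c).symm (Prod.ext (smul_zero c).symm ?_)
    show (∑ i, (x.1 i * (c • y).2.1 i - (c • y).1 i * x.2.1 i)) =
      c * (∑ i, (x.1 i * y.2.1 i - y.1 i * x.2.1 i))
    rw [Finset.mul_sum]
    refine Finset.sum_congr rfl fun i _ => ?_
    show (x.1 i * (c • y.2.1) i - (c • y.1) i * x.2.1 i) = _
    simp only [Pi.smul_apply, smul_eq_mul]; ring

/-! Feeding `(eᵢ, fᵢ, w)` to the cocycle identity shows that `ω(z, w)` depends only on the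
`i`-th coordinates of `w`. For `n ≥ 2` this holds for two different indices, which forces
`ω(z, ·) = 0`. Since also `α(z) = α[e₁, f₁] = 0`, the map `Φ` identifies `z` with `0`. -/

namespace Heis

variable {n : ℕ}

def z (n : ℕ) : Heis n := (0, 0, 1)

noncomputable def e (i : Fin n) : Heis n := (Pi.single i 1, 0, 0)

noncomputable def f (i : Fin n) : Heis n := (0, Pi.single i 1, 0)

theorem z_ne_zero : z n ≠ 0 := fun h => one_ne_zero (congrArg (fun v : Heis n => v.2.2) h)

theorem lie_eq_smul_z (x y : Heis n) :
    ⁅x, y⁆ = (∑ i, (x.1 i * y.2.1 i - y.1 i * x.2.1 i)) • z n :=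
  Prod.ext (smul_zero _).symm (Prod.ext (smul_zero _).symm (mul_one _).symm)

theorem lie_e_f (i : Fin n) : ⁅e i, f i⁆ = z n := by
  rw [lie_eq_smul_z]
  simp [e, f, Pi.single_apply]

theorem lie_f_left (i : Fin n) (w : Heis n) : ⁅f i, w⁆ = (-w.1 i) • z n := by
  rw [lie_eq_smul_z]
  simp [f, Pi.single_apply]

theorem lie_e_right (i : Fin n) (w : Heis n) : ⁅w, e i⁆ = (-w.2.1 i) • z n := by
  rw [lie_eq_smul_z]
  simp [e, Pi.single_apply]

section Cocycle

variable (ω : Heis n →ₗ[ℝ] Heis n →ₗ[ℝ] ℝ)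
  (hcocycle : ∀ x y w : Heis n, ω ⁅x, y⁆ w + ω ⁅y, w⁆ x + ω ⁅w, x⁆ y = 0)
include hcocycle

theorem cocycle_z_apply (i : Fin n) (w : Heis n) :
    ω (z n) w = w.1 i * ω (z n) (e i) + w.2.1 i * ω (z n) (f i) := by
  have h := hcocycle (e i) (f i) w
  rw [lie_e_f, lie_f_left, lie_e_right] at h
  simp only [map_smul, LinearMap.smul_apply, smul_eq_mul] at h
  linarith

theorem cocycle_z_e_of_ne {i j : Fin n} (hij : i ≠ j) : ω (z n) (e j) = 0 := by
  simpa [e, Pi.single_apply, hij] using cocycle_z_apply ω hcocycle i (e j)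

theorem cocycle_z_f_of_ne {i j : Fin n} (hij : i ≠ j) : ω (z n) (f j) = 0 := by
  simpa [f, Pi.single_apply, hij] using cocycle_z_apply ω hcocycle i (f j)

theorem cocycle_z_eq_zero (hn : 2 ≤ n) : ω (z n) = 0 := by
  have : Nontrivial (Fin n) := Fin.nontrivial_iff_two_le.mpr hn
  have he (j : Fin n) : ω (z n) (e j) = 0 :=
    let ⟨_, hij⟩ := exists_ne j; cocycle_z_e_of_ne ω hcocycle hij
  have hf (j : Fin n) : ω (z n) (f j) = 0 :=
    let ⟨_, hij⟩ := exists_ne j; cocycle_z_f_of_ne ω hcocycle hij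
  ext w
  rw [cocycle_z_apply ω hcocycle ⟨0, by omega⟩ w, he, hf]
  simp

end Cocycle

end Heis

theorem LinearMap.not_injective_apply_add_smul {R M : Type*} [CommSemiring R] [AddCommMonoid M]
    [Module R M] (ω : M →ₗ[R] M →ₗ[R] R) (α : M →ₗ[R] R) {c : M} (hc : c ≠ 0)
    (hω : ω c = 0) (hα : α c = 0) :
    ¬ Function.Injective (fun x : M => ω x + α x • α) :=
  fun hinj => hc (hinj (by simp [hω, hα]))

/-- For the Heisenberg algebra `H_{2n+1}` with `n ≥ 2`, every
scalar 2-cocycle `ω` pairs to zero with the central generator `z = (0,0,1)`;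
consequently, for any 1-form `α` vanishing on brackets, the map
`Φ(x) = ι_x ω + α(x) α` is not injective. -/
theorem heisenberg_cocycle_central (n : ℕ) (hn : 2 ≤ n)
    (ω : Heis n →ₗ[ℝ] Heis n →ₗ[ℝ] ℝ)
    (hskew : ∀ x y : Heis n, ω x y = - ω y x)
    (hcocycle : ∀ x y w : Heis n, ω ⁅x, y⁆ w + ω ⁅y, w⁆ x + ω ⁅w, x⁆ y = 0) :
    (∀ x : Heis n, ω x ((0, 0, 1) : Heis n) = 0) ∧
    (∀ α : Heis n →ₗ[ℝ] ℝ, (∀ x y : Heis n, α ⁅x, y⁆ = 0) →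
      ¬ Function.Injective (fun x : Heis n => ω x + α x • α)) := by
  have hωz := Heis.cocycle_z_eq_zero ω hcocycle hn
  refine ⟨fun x => ?_, fun α hα => ?_⟩
  · show ω x (Heis.z n) = 0
    rw [hskew]
    exact neg_eq_zero.mpr (LinearMap.congr_fun hωz x)
  · have hαz : α (Heis.z n) = 0 := Heis.lie_e_f (⟨0, by omega⟩ : Fin n) ▸ hα _ _
    exact LinearMap.not_injective_apply_add_smul ω α Heis.z_ne_zero hωz hαz
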